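/- arXiv:2112.05460 — 5 statements merged into one kernel-verified Lean document; each statement's English description precedes it below -/
import Mathlib

section
/- Let T be an n-tournament. Then the following are equivalent: (i) there exists a constant c such that every pair of distinct vertices of T is contained in exactly c directed 3-cycles; (ii) T is transitive or doubly regular. -/
open Polynomial Matrix

/-- An `n`-tournament given by its adjacency matrix: entries in `{0,1}`, zero diagonal,
and `A + Aᵀ = J - I` where `J` is the all-ones matrix. -/
def IsTournament {n : ℕ} (A : Matrix (Fin n) (Fin n) ℚ) : Prop :=
  (∀ i j, A i j = 0 ∨ A i j = 1) ∧ (∀ i, A i i = 0) ∧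
    A + Aᵀ = Matrix.of (fun _ _ => (1 : ℚ)) - 1

/-- Transitivity of the dominance relation. -/
def IsTransitive {n : ℕ} (A : Matrix (Fin n) (Fin n) ℚ) : Prop :=
  ∀ i j k, A i j = 1 → A j k = 1 → A i k = 1

/-- `A` is `k`-spectrally monomorphic: all `k × k` principal submatrices of `A`
have the same characteristic polynomial. -/
def SpecMono {n : ℕ} (k : ℕ) (A : Matrix (Fin n) (Fin n) ℚ) : Prop :=
  ∀ f g : Fin k → Fin n, Function.Injective f → Function.Injective g →
    (A.submatrix f f).charpoly = (A.submatrix g g).charpoly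

/-- `A` is doubly regular: every pair of distinct vertices jointly dominates exactly
`t` vertices, i.e. every off-diagonal entry of `A * Aᵀ` equals `t`. -/
def IsDoublyRegular {n : ℕ} (A : Matrix (Fin n) (Fin n) ℚ) : Prop :=
  ∃ t : ℕ, ∀ i j, i ≠ j → (A * Aᵀ) i j = t

/-- `A` is regular: every row sums to `(n - 1) / 2`. -/
def IsRegularTournament {n : ℕ} (A : Matrix (Fin n) (Fin n) ℚ) : Prop :=
  ∀ i, ∑ j, A i j = ((n : ℚ) - 1) / 2

/-- The out-neighborhood of `x`: vertices dominated by `x`. -/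
def outN {n : ℕ} (A : Matrix (Fin n) (Fin n) ℚ) (x : Fin n) : Finset (Fin n) :=
  Finset.univ.filter (fun z => A x z = 1)

/-- The in-neighborhood of `x`: vertices dominating `x`. -/
def inN {n : ℕ} (A : Matrix (Fin n) (Fin n) ℚ) (x : Fin n) : Finset (Fin n) :=
  Finset.univ.filter (fun z => A z x = 1)


/-! For an arc `x → y`, the out-neighbourhood of `y` splits into the vertices closing a 3-cycle
with `x y` and those jointly dominated by `x` and `y`, so `c(x, y) + |N⁺x ∩ N⁺y| = d⁺(y)`.
If every arc lies in `c > 0` 3-cycles, counting the arcs from `N⁺x` to `N⁻x` in two ways gives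
`c · d⁺(x) = c · d⁻(x)`: the tournament is regular, and the joint out-degree of any two vertices
is `(n - 1) / 2 - c`. If `c = 0` there are no 3-cycles, which is transitivity.

Conversely, if any two vertices jointly dominate `t` vertices, then every `N⁺x` spans a
subtournament in which every vertex has out-degree `t`, so `d⁺(x) ∈ {0, 2t + 1}`. A sink with
an in-arc forces `t = 0` and is then the head of every arc, so all heads of arcs have the same
out-degree `d`, and every arc lies in `d - t` 3-cycles. -/

open Finset

section Neighborhoods

variable {n : ℕ} {A : Matrix (Fin n) (Fin n) ℚ}

@[simp]
lemma mem_outN {x z : Fin n} : z ∈ outN A x ↔ A x z = 1 := by simp [outN]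

@[simp]
lemma mem_inN {x z : Fin n} : z ∈ inN A x ↔ A z x = 1 := by simp [inN]

lemma sum_card_inter_outN_eq_sum_card_inter_inN (S T : Finset (Fin n)) :
    ∑ y ∈ S, #(T ∩ outN A y) = ∑ z ∈ T, #(S ∩ inN A z) := by
  have h := @sum_card_bipartiteAbove_eq_sum_card_bipartiteBelow _ _ (fun y z => A y z = 1) S T
    (fun _ _ => inferInstance)
  simpa [bipartiteAbove, bipartiteBelow, outN, inN, inter_filter] using h

lemma mul_transpose_apply_eq_card_outN_inter_outN (h01 : ∀ i j, A i j = 0 ∨ A i j = 1)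
    (x y : Fin n) : (A * Aᵀ) x y = #(outN A x ∩ outN A y) := by
  have hterm : ∀ z, A x z * A y z = if z ∈ outN A x ∩ outN A y then 1 else 0 := by
    intro z
    rcases h01 x z with h | h <;> rcases h01 y z with h' | h' <;> simp [h, h']
  simp only [mul_apply, transpose_apply, hterm, sum_boole, filter_mem_eq_inter, univ_inter]

lemma isDoublyRegular_iff (h01 : ∀ i j, A i j = 0 ∨ A i j = 1) :
    IsDoublyRegular A ↔ ∃ t : ℕ, ∀ i j, i ≠ j → #(outN A i ∩ outN A j) = t := by
  simp only [IsDoublyRegular, mul_transpose_apply_eq_card_outN_inter_outN h01, Nat.cast_inj]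

lemma card_outN_eq_card_inN_of_card_inN_inter_outN_eq {c : ℕ} (hc0 : c ≠ 0)
    (hc : ∀ x y, A x y = 1 → #(inN A x ∩ outN A y) = c) (x : Fin n) :
    #(outN A x) = #(inN A x) := by
  have hout : ∑ y ∈ outN A x, #(inN A x ∩ outN A y) = #(outN A x) * c := by
    rw [sum_congr rfl fun y hy => hc x y (mem_outN.1 hy), sum_const, smul_eq_mul]
  have hin : ∑ z ∈ inN A x, #(outN A x ∩ inN A z) = #(inN A x) * c := by
    simp_rw [inter_comm (outN A x)]
    rw [sum_congr rfl fun z hz => hc z x (mem_inN.1 hz), sum_const, smul_eq_mul]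
  have hcount := sum_card_inter_outN_eq_sum_card_inter_inN (A := A) (outN A x) (inN A x)
  rw [hout, hin] at hcount
  exact Nat.eq_of_mul_eq_mul_right (Nat.pos_of_ne_zero hc0) hcount

end Neighborhoods

namespace IsTournament

variable {n : ℕ} {A : Matrix (Fin n) (Fin n) ℚ}

lemma apply_add_apply (hT : IsTournament A) {i j : Fin n} (hij : i ≠ j) :
    A i j + A j i = 1 := by
  simpa [hij] using congrFun (congrFun hT.2.2 i) j

lemma ne_of_apply_eq_one (hT : IsTournament A) {i j : Fin n} (h : A i j = 1) : i ≠ j := by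
  rintro rfl
  simp [hT.2.1] at h

lemma apply_eq_one_iff_ne_one (hT : IsTournament A) {i j : Fin n} (hij : i ≠ j) :
    A j i = 1 ↔ A i j ≠ 1 := by
  have := hT.apply_add_apply hij
  rcases hT.1 i j with h | h <;> constructor <;> intro <;> simp_all

lemma apply_ne_one_of_apply_eq_one (hT : IsTournament A) {i j : Fin n} (h : A i j = 1) :
    A j i ≠ 1 :=
  (hT.apply_eq_one_iff_ne_one (hT.ne_of_apply_eq_one h).symm).1 h

lemma apply_eq_one_or_apply_eq_one (hT : IsTournament A) {i j : Fin n} (hij : i ≠ j) :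
    A i j = 1 ∨ A j i = 1 :=
  or_iff_not_imp_left.2 (hT.apply_eq_one_iff_ne_one hij).2

lemma card_inter_outN_add_card_inter_inN (hT : IsTournament A) {S : Finset (Fin n)}
    {x : Fin n} (hx : x ∉ S) : #(S ∩ outN A x) + #(S ∩ inN A x) = #S := by
  have hout : S ∩ outN A x = S.filter (fun z => A x z = 1) := by ext; simp
  have hin : S ∩ inN A x = S.filter (fun z => ¬A x z = 1) := by
    ext z
    simp only [mem_inter, mem_inN, mem_filter]
    exact and_congr_right fun hz => hT.apply_eq_one_iff_ne_one (ne_of_mem_of_not_mem hz hx).symm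
  rw [hout, hin, card_filter_add_card_filter_not]

lemma card_inter_outN_add_card_inter_inN_add_one (hT : IsTournament A) {S : Finset (Fin n)}
    {x : Fin n} (hx : x ∈ S) : #(S ∩ outN A x) + #(S ∩ inN A x) + 1 = #S := by
  have hxout : x ∉ S ∩ outN A x := by simp [hT.2.1]
  have hxin : x ∉ S ∩ inN A x := by simp [hT.2.1]
  have h := hT.card_inter_outN_add_card_inter_inN (notMem_erase x S)
  rw [erase_inter, erase_inter, erase_eq_of_notMem hxout, erase_eq_of_notMem hxin] at h
  rw [h, card_erase_add_one hx]

lemma card_outN_add_card_inN (hT : IsTournament A) (x : Fin n) :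
    #(outN A x) + #(inN A x) + 1 = n := by
  simpa using hT.card_inter_outN_add_card_inter_inN_add_one (mem_univ x)

lemma card_inN_inter_outN_add_card_outN_inter_outN (hT : IsTournament A) {x y : Fin n}
    (hxy : A x y = 1) : #(inN A x ∩ outN A y) + #(outN A x ∩ outN A y) = #(outN A y) := by
  have hx : x ∉ outN A y := by simpa using hT.apply_ne_one_of_apply_eq_one hxy
  rw [inter_comm, inter_comm (outN A x), add_comm]
  exact hT.card_inter_outN_add_card_inter_inN hx

lemma two_mul_sum_card_inter_outN (hT : IsTournament A) (S : Finset (Fin n)) :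
    2 * ∑ y ∈ S, #(S ∩ outN A y) = #S * (#S - 1) := by
  have hsum : ∑ y ∈ S, (#(S ∩ outN A y) + #(S ∩ inN A y) + 1) = #S * #S := by
    rw [sum_congr rfl fun y hy => hT.card_inter_outN_add_card_inter_inN_add_one hy, sum_const,
      smul_eq_mul]
  rw [sum_add_distrib, sum_add_distrib, ← sum_card_inter_outN_eq_sum_card_inter_inN, sum_const,
    smul_eq_mul, mul_one] at hsum
  rw [Nat.mul_sub_one]
  omega

lemma isTransitive_iff (hT : IsTournament A) :
    IsTransitive A ↔ ∀ x y, A x y = 1 → inN A x ∩ outN A y = ∅ := by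
  simp only [IsTransitive, eq_empty_iff_forall_notMem, mem_inter, mem_inN, mem_outN, not_and]
  constructor
  · intro htr x y hxy z hzx hyz
    exact hT.apply_ne_one_of_apply_eq_one (htr x y z hxy hyz) hzx
  · intro h i j k hij hjk
    by_contra hik
    have hik' : i ≠ k := by
      rintro rfl
      exact hT.apply_ne_one_of_apply_eq_one hij hjk
    exact h i j hij k ((hT.apply_eq_one_iff_ne_one hik').2 hik) hjk

lemma isDoublyRegular_of_card_inN_inter_outN_eq (hT : IsTournament A) {c : ℕ} (hc0 : c ≠ 0)
    (hc : ∀ x y, A x y = 1 → #(inN A x ∩ outN A y) = c) : IsDoublyRegular A := by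
  have hdeg (x : Fin n) : #(outN A x) = n / 2 := by
    have := hT.card_outN_add_card_inN x
    have := card_outN_eq_card_inN_of_card_inN_inter_outN_eq hc0 hc x
    omega
  refine (isDoublyRegular_iff hT.1).2 ⟨n / 2 - c, fun i j hij => ?_⟩
  rcases hT.apply_eq_one_or_apply_eq_one hij with h | h
  · have := hT.card_inN_inter_outN_add_card_outN_inter_outN h
    have := hc i j h
    have := hdeg j
    omega
  · have := hT.card_inN_inter_outN_add_card_outN_inter_outN h
    have := hc j i h
    have := hdeg i
    rw [inter_comm]
    omega

lemma card_outN_eq_zero_or_eq (hT : IsTournament A) {t : ℕ}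
    (ht : ∀ i j, i ≠ j → #(outN A i ∩ outN A j) = t) (x : Fin n) :
    #(outN A x) = 0 ∨ #(outN A x) = 2 * t + 1 := by
  have h := hT.two_mul_sum_card_inter_outN (outN A x)
  rw [sum_congr rfl fun y hy => ht x y (hT.ne_of_apply_eq_one (mem_outN.1 hy)), sum_const,
    smul_eq_mul, ← mul_assoc, mul_comm 2, mul_assoc] at h
  rcases Nat.eq_zero_or_pos #(outN A x) with h0 | hpos
  · exact Or.inl h0
  · have := Nat.eq_of_mul_eq_mul_left hpos h
    omega

lemma apply_eq_one_of_outN_eq_empty (hT : IsTournament A) {y z : Fin n} (hy : outN A y = ∅)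
    (hzy : z ≠ y) : A z y = 1 :=
  (hT.apply_eq_one_or_apply_eq_one hzy).resolve_right fun h => by
    simpa [hy] using mem_outN.2 h

/-- A sink with an in-arc forces `t = 0`, while the two ends of an arc avoiding the sink
would jointly dominate it. -/
lemma eq_of_apply_eq_one_of_outN_eq_empty (hT : IsTournament A) {t : ℕ}
    (ht : ∀ i j, i ≠ j → #(outN A i ∩ outN A j) = t) {x y u v : Fin n} (hxy : A x y = 1)
    (hy : outN A y = ∅) (huv : A u v = 1) : v = y := by
  have ht0 : t = 0 := by simpa [hy] using (ht x y (hT.ne_of_apply_eq_one hxy)).symm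
  have huy : u ≠ y := by
    rintro rfl
    simpa [hy] using mem_outN.2 huv
  by_contra hvy
  have hmem : y ∈ outN A u ∩ outN A v := by
    simp [hT.apply_eq_one_of_outN_eq_empty hy huy, hT.apply_eq_one_of_outN_eq_empty hy hvy]
  simpa [ht u v (hT.ne_of_apply_eq_one huv), ht0] using card_pos.2 ⟨y, hmem⟩

lemma card_outN_eq_card_outN_of_apply_eq_one (hT : IsTournament A) {t : ℕ}
    (ht : ∀ i j, i ≠ j → #(outN A i ∩ outN A j) = t) {x y u v : Fin n} (hxy : A x y = 1)
    (huv : A u v = 1) : #(outN A y) = #(outN A v) := by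
  rcases hT.card_outN_eq_zero_or_eq ht y with hy | hy <;>
    rcases hT.card_outN_eq_zero_or_eq ht v with hv | hv
  · omega
  · rw [hT.eq_of_apply_eq_one_of_outN_eq_empty ht hxy (card_eq_zero.1 hy) huv]
  · rw [hT.eq_of_apply_eq_one_of_outN_eq_empty ht huv (card_eq_zero.1 hv) hxy]
  · omega

lemma exists_card_inN_inter_outN_eq_of_isDoublyRegular (hT : IsTournament A)
    (h : IsDoublyRegular A) : ∃ c : ℕ, ∀ x y, A x y = 1 → #(inN A x ∩ outN A y) = c := by
  obtain ⟨t, ht⟩ := (isDoublyRegular_iff hT.1).1 h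
  by_cases harc : ∃ u v, A u v = 1
  · obtain ⟨u, v, huv⟩ := harc
    refine ⟨#(outN A v) - t, fun x y hxy => ?_⟩
    have := hT.card_inN_inter_outN_add_card_outN_inter_outN hxy
    have := ht x y (hT.ne_of_apply_eq_one hxy)
    have := hT.card_outN_eq_card_outN_of_apply_eq_one ht hxy huv
    omega
  · simp only [not_exists] at harc
    exact ⟨0, fun x y hxy => absurd hxy (harc x y)⟩

end IsTournament

/-- The number of directed 3-cycles through the pair `{x, y}`, where `x` dominates `y`,
is `|N⁻(x) ∩ N⁺(y)|`. -/
theorem stmt_9 (n : ℕ) (A : Matrix (Fin n) (Fin n) ℚ) (hT : IsTournament A) :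
    (∃ c : ℕ, ∀ x y : Fin n, x ≠ y → A x y = 1 → (inN A x ∩ outN A y).card = c) ↔
      (IsTransitive A ∨ IsDoublyRegular A) := by
  calc (∃ c : ℕ, ∀ x y : Fin n, x ≠ y → A x y = 1 → (inN A x ∩ outN A y).card = c)
      ↔ ∃ c : ℕ, ∀ x y, A x y = 1 → #(inN A x ∩ outN A y) = c :=
        exists_congr fun _ => forall₂_congr fun _ _ =>
          ⟨fun h hxy => h (hT.ne_of_apply_eq_one hxy) hxy, fun h _ => h⟩
    _ ↔ IsTransitive A ∨ IsDoublyRegular A := by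
      constructor
      · rintro ⟨c, hc⟩
        rcases eq_or_ne c 0 with rfl | hc0
        · exact Or.inl (hT.isTransitive_iff.2 fun x y hxy => card_eq_zero.1 (hc x y hxy))
        · exact Or.inr (hT.isDoublyRegular_of_card_inN_inter_outN_eq hc0 hc)
      · rintro (htr | hdr)
        · exact ⟨0, fun x y hxy => card_eq_zero.2 (hT.isTransitive_iff.1 htr x y hxy)⟩
        · exact hT.exists_card_inN_inter_outN_eq_of_isDoublyRegular hdr
end

section
/- Let T be a regular n-tournament with adjacency matrix A, and for i ∈ {1,...,n} let A_i denote the (n−1)×(n−1) principal submatrix of A obtained by deleting row and column i. Then, as polynomials, P_A(z) = (1/2)·(z − (n−1)/2)·[(n + 2z + 1)·P_{A_i}(z) + (n − 2z − 1)·P_{A_i}(−z−1)], where P_{A_i}(−z−1) denotes the composition of P_{A_i} with the polynomial −z−1. -/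
open Polynomial Matrix

/-- The principal submatrix of `A` obtained by deleting row and column `i`. -/
def deleteVertex {n : ℕ} (A : Matrix (Fin n) (Fin n) ℚ) (i : Fin n) :
    Matrix {x : Fin n // x ≠ i} {x : Fin n // x ≠ i} ℚ :=
  A.submatrix (fun x => (x : Fin n)) (fun x => (x : Fin n))

/-!
Write `M = zI - A`, `J` (`𝟙` below) for the all-ones matrix and `u = z - (n - 1) / 2`.
Regularity says `M J = J M = u J`, and the tournament condition `A + Aᵀ = J - I` says
`(-z - 1) I - A = -(M + J)ᵀ`. Hence `P_{A_i}(z)` and `P_{A_i}(-z - 1)` are the `(i, i)` entries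
of `adj M` and, `n` being odd, of `adj (M + J)`. As `J` has rank one and `J² = n J`, one checks
`(M + J) (u (u + n) adj M - det M • J) = u (u + n) det M • 1` and `u det (M + J) = (u + n) det M`,
so `u² adj (M + J) = u (u + n) adj M - det M • J` over `ℚ[z]`. Its `(i, i)` entry reads
`P_A = u (u + n) P_{A_i}(z) - u² P_{A_i}(-z - 1)`, which is the claimed formula.
-/

open Finset

local notation "𝟙" => Matrix.of fun _ _ => 1

namespace Matrix
variable {m R : Type*} [Fintype m] [CommRing R]

theorem ones_mul_ones : (𝟙 : Matrix m m R) * 𝟙 = (Fintype.card m : R) • 𝟙 := by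
  ext; simp [mul_apply]

variable [DecidableEq m]

theorem adjugate_apply_self_eq_det_submatrix (W : Matrix m m R) (i : m) :
    W.adjugate i i = (W.submatrix ((↑) : {x // x ≠ i} → m) (↑)).det := by
  rw [adjugate_apply, twoBlockTriangular_det' _ (· = i)]
  · convert one_mul _ using 2
    · convert det_eq_elem_of_subsingleton _ (⟨i, rfl⟩ : {x // x = i})
      simp [toSquareBlockProp, toBlock]
    · ext a b
      simp [toSquareBlockProp, toBlock, a.2]
  · rintro k rfl j hj
    simp [hj]

theorem charpoly_submatrix_ne_eq_adjugate_charmatrix (A : Matrix m m R) (i : m) :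
    (A.submatrix ((↑) : {x // x ≠ i} → m) (↑)).charpoly = A.charmatrix.adjugate i i := by
  rw [adjugate_apply_self_eq_det_submatrix, charpoly]
  congr 1
  ext a b : 1
  by_cases h : a = b
  · subst h; simp
  · have h' : (a : m) ≠ b := fun e => h (Subtype.ext e)
    rw [submatrix_apply, charmatrix_apply_ne _ _ _ h, charmatrix_apply_ne _ _ _ h', submatrix_apply]

-- `𝟙` is a column of ones times a row of ones, so `charpoly_mul_comm'` reduces `charpoly (-𝟙)`
-- to a `1 × 1` determinant.
theorem det_smul_one_add_ones (u : R) :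
    u * (u • 1 + 𝟙 : Matrix m m R).det = u ^ Fintype.card m * (u + Fintype.card m) := by
  have h := congrArg (eval u) (charpoly_mul_comm' (replicateCol Unit fun _ : m => (-1 : R))
    (replicateRow Unit fun _ : m => (1 : R)))
  simp only [eval_mul, eval_pow, eval_X, eval_charpoly, Fintype.card_unit, pow_one, det_unique] at h
  convert h using 2
  · congr 1
    ext a b
    simp [replicateCol, replicateRow, mul_apply, sub_eq_add_neg, one_apply, diagonal_apply]
  · simp [replicateCol, replicateRow, mul_apply, sub_eq_add_neg]

variable {M : Matrix m m R} {u : R}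

theorem smul_ones_mul_adjugate (hJM : 𝟙 * M = u • 𝟙) : u • (𝟙 * M.adjugate) = M.det • 𝟙 := by
  rw [← smul_mul, ← hJM, Matrix.mul_assoc, mul_adjugate, Matrix.mul_smul, Matrix.mul_one]

theorem add_ones_mul_eq_smul_one (hMJ : M * 𝟙 = u • 𝟙) (hJM : 𝟙 * M = u • 𝟙) :
    (M + 𝟙) * ((u * (u + Fintype.card m)) • M.adjugate - M.det • 𝟙) =
      (u * (u + Fintype.card m) * M.det) • 1 := by
  have hJadj := smul_ones_mul_adjugate hJM
  rw [Matrix.add_mul, Matrix.mul_sub, Matrix.mul_sub, Matrix.mul_smul, Matrix.mul_smul,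
    Matrix.mul_smul, Matrix.mul_smul, mul_adjugate, hMJ, ones_mul_ones]
  linear_combination (norm := module) (u + Fintype.card m) • hJadj

theorem det_add_ones [IsDomain R] (hMJ : M * 𝟙 = u • 𝟙) (hu : u ≠ 0) :
    u * (M + 𝟙).det = (u + Fintype.card m) * M.det := by
  have hfac : M * (u • 1 + 𝟙) = u • (M + 𝟙) := by
    rw [Matrix.mul_add, Matrix.mul_smul, Matrix.mul_one, hMJ, smul_add]
  have hdet := congrArg (u * det ·) hfac
  simp only [det_mul, det_smul] at hdet
  rw [mul_left_comm, det_smul_one_add_ones] at hdet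
  apply mul_left_cancel₀ (pow_ne_zero (Fintype.card m) hu)
  linear_combination -hdet

theorem adjugate_add_ones [IsDomain R] (hMJ : M * 𝟙 = u • 𝟙) (hJM : 𝟙 * M = u • 𝟙) (hu : u ≠ 0)
    (hun : u + Fintype.card m ≠ 0) (hM : M.det ≠ 0) :
    u ^ 2 • (M + 𝟙).adjugate = (u * (u + Fintype.card m)) • M.adjugate - M.det • 𝟙 := by
  set Y := (u * (u + Fintype.card m)) • M.adjugate - M.det • 𝟙
  have hY : (M + 𝟙).det • Y = (u * (u + Fintype.card m) * M.det) • (M + 𝟙).adjugate := by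
    rw [← Matrix.one_mul Y, ← smul_mul, ← adjugate_mul, Matrix.mul_assoc,
      add_ones_mul_eq_smul_one hMJ hJM, Matrix.mul_smul, Matrix.mul_one]
  have hdet := det_add_ones hMJ hu
  apply smul_right_injective _ (mul_ne_zero hun hM)
  dsimp only
  rw [← hdet, mul_smul u _ Y, hY, smul_smul, smul_smul]
  congr 1
  linear_combination u ^ 2 * hdet

end Matrix

variable {n : ℕ} {A : Matrix (Fin n) (Fin n) ℚ}

theorem IsRegularTournament.col_sum (hT : IsTournament A) (hR : IsRegularTournament A)
    (j : Fin n) : ∑ k, A k j = ((n : ℚ) - 1) / 2 := by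
  have h := congrArg (fun B => ∑ k, B j k) hT.2.2
  simp only [Matrix.add_apply, transpose_apply, sum_add_distrib, hR j, Matrix.sub_apply,
    of_apply, one_apply, sum_sub_distrib, sum_const, card_univ, Fintype.card_fin, nsmul_eq_mul,
    mul_one, sum_ite_eq, mem_univ, if_true] at h
  linarith

theorem IsRegularTournament.odd (hT : IsTournament A) (hR : IsRegularTournament A) (i : Fin n) :
    Odd n := by
  have hcard : ∑ j, A i j = (#{j | A i j = 1} : ℚ) := by
    rw [natCast_card_filter]
    refine sum_congr rfl fun j _ => ?_
    rcases hT.1 i j with h | h <;> simp [h]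
  refine ⟨#{j | A i j = 1}, ?_⟩
  have := hR i
  rw [hcard] at this
  exact_mod_cast (by linarith : (n : ℚ) = 2 * #{j | A i j = 1} + 1)

theorem IsRegularTournament.charmatrix_mul_ones (hR : IsRegularTournament A) :
    A.charmatrix * 𝟙 = (X - C (((n : ℚ) - 1) / 2)) • 𝟙 := by
  ext a b : 1
  simp [mul_apply, charmatrix_apply, sum_sub_distrib, ← map_sum, hR a, diagonal_apply]

theorem IsRegularTournament.ones_mul_charmatrix (hT : IsTournament A)
    (hR : IsRegularTournament A) :
    𝟙 * A.charmatrix = (X - C (((n : ℚ) - 1) / 2)) • 𝟙 := by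
  ext a b : 1
  simp [mul_apply, charmatrix_apply, sum_sub_distrib, ← map_sum, hR.col_sum hT b, diagonal_apply]

theorem IsTournament.map_comp_charmatrix (hT : IsTournament A) :
    (compRingHom (-X - 1)).mapMatrix A.charmatrix = -(A.charmatrix + 𝟙)ᵀ := by
  ext a b : 1
  simp only [RingHom.mapMatrix_apply, map_apply, coe_compRingHom_apply]
  by_cases hab : a = b
  · subst hab
    simp [charmatrix_apply_eq, hT.2.1]
    ring
  · have h := congrFun₂ hT.2.2 a b
    simp only [Matrix.add_apply, transpose_apply, Matrix.sub_apply, of_apply, one_apply,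
      if_neg hab, sub_zero] at h
    have hba : b ≠ a := Ne.symm hab
    simp [charmatrix_apply_ne _ _ _ hba, hab, show A a b = 1 - A b a by linarith]
    ring

theorem IsTournament.charpoly_deleteVertex_comp (hT : IsTournament A) (hn : Odd n) (i : Fin n) :
    (deleteVertex A i).charpoly.comp (-X - 1) = (A.charmatrix + 𝟙).adjugate i i := by
  have hsign : (-1 : ℚ[X]) ^ (Fintype.card (Fin n) - 1) = 1 := by
    obtain ⟨k, rfl⟩ := hn
    simp
  have hmap := congrFun₂ ((compRingHom (-X - 1)).map_adjugate A.charmatrix) i i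
  simp only [hT.map_comp_charmatrix, RingHom.mapMatrix_apply, map_apply,
    coe_compRingHom_apply] at hmap
  rw [deleteVertex, charpoly_submatrix_ne_eq_adjugate_charmatrix, hmap,
    ← neg_one_smul ℚ[X], adjugate_smul, hsign, one_smul, ← adjugate_transpose, transpose_apply]

theorem IsRegularTournament.charpoly_eq (hT : IsTournament A) (hR : IsRegularTournament A)
    (i : Fin n) :
    A.charpoly =
      (X - C (((n : ℚ) - 1) / 2)) * (X - C (((n : ℚ) - 1) / 2) + (n : ℚ[X])) *
        (deleteVertex A i).charpoly -
        (X - C (((n : ℚ) - 1) / 2)) ^ 2 * (deleteVertex A i).charpoly.comp (-X - 1) := by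
  have hun : X - C (((n : ℚ) - 1) / 2) + (Fintype.card (Fin n) : ℚ[X]) ≠ 0 := by
    rw [Fintype.card_fin, ← C_eq_natCast, sub_add, ← C_sub]
    exact X_sub_C_ne_zero _
  have hkey := congrFun₂ (adjugate_add_ones hR.charmatrix_mul_ones (hR.ones_mul_charmatrix hT)
    (X_sub_C_ne_zero _) hun A.charpoly_monic.ne_zero) i i
  simp only [Matrix.smul_apply, Matrix.sub_apply, of_apply, smul_eq_mul, mul_one,
    Fintype.card_fin] at hkey
  rw [hT.charpoly_deleteVertex_comp (hR.odd hT i), deleteVertex,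
    charpoly_submatrix_ne_eq_adjugate_charmatrix, charpoly]
  linear_combination hkey

theorem stmt_11 (n : ℕ) (A : Matrix (Fin n) (Fin n) ℚ)
    (hT : IsTournament A) (hR : IsRegularTournament A) (i : Fin n) :
    A.charpoly =
      C (1 / 2 : ℚ) * (X - C (((n : ℚ) - 1) / 2)) *
        ((C (n : ℚ) + 2 * X + 1) * (deleteVertex A i).charpoly +
          (C (n : ℚ) - 2 * X - 1) * ((deleteVertex A i).charpoly.comp (-X - 1))) := by
  have h2 : C (1 / 2 : ℚ) * 2 = 1 := by rw [← C_ofNat, ← C_mul]; norm_num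
  have hc : C (((n : ℚ) - 1) / 2) = C (1 / 2 : ℚ) * ((n : ℚ[X]) - 1) := by
    rw [← C_eq_natCast, ← C_1, ← C_sub, ← C_mul]; ring_nf
  rw [hR.charpoly_eq hT i, C_eq_natCast]
  set u := X - C (((n : ℚ) - 1) / 2)
  set p := (deleteVertex A i).charpoly
  set q := p.comp (-X - 1)
  linear_combination u * ((q * X - p * (X + n)) * h2 + (q - p) * hc)
end

section
/- Let n ≥ 4 and let R_n be the tournament on vertices v_1, ..., v_n obtained from the transitive tournament (v_i dominates v_j iff i < j) by reversing the arc from v_1 to v_n, with adjacency matrix A. Then the characteristic polynomial of A is z^n − Σ_{k=3}^{n} C(n−2, k−2) z^{n−k}. -/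
open Polynomial Matrix

/-!
Expanding `det (X • 1 - A)` along the last row, whose only nonzero entries are `-1` in the first
column and `X` on the diagonal, leaves an upper triangular minor with determinant `X ^ (n - 1)` and
an upper Hessenberg minor: `X` on the subdiagonal, `-1` on and above the diagonal, except for a `0`
in the top right corner. Expanding such a Hessenberg matrix with corner entry `c` along its first
column gives a recursion whose solution is linear in `c`, namely
`(-1) ^ (m + 1) * (1 + X) ^ m + (-1) ^ m * (c + 1) * X ^ m`. Hence
`charpoly A = X ^ n + X ^ (n - 2) - (1 + X) ^ (n - 2)`, and the binomial theorem turns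
`(1 + X) ^ (n - 2) - X ^ (n - 2)` into the sum of the statement.
-/

open Finset

section Hessenberg

variable {R : Type*} [CommRing R]

def cornerHessenberg (z c : R) (m : ℕ) : Matrix (Fin (m + 1)) (Fin (m + 1)) R :=
  Matrix.of fun a b =>
    if (a : ℕ) = b + 1 then z else if (a : ℕ) = 0 ∧ (b : ℕ) = m then c
    else if (a : ℕ) ≤ b then -1 else 0

variable (z c : R) (m : ℕ)

lemma cornerHessenberg_submatrix_zero_succ :
    (cornerHessenberg z c (m + 1)).submatrix (Fin.succAbove 0) Fin.succ =
      cornerHessenberg z (-1) m := by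
  ext a b
  have := b.isLt
  simp only [submatrix_apply, Fin.zero_succAbove, cornerHessenberg, of_apply, Fin.val_succ]
  split_ifs <;> first | rfl | omega | simp_all

lemma cornerHessenberg_submatrix_one_succ :
    (cornerHessenberg z c (m + 1)).submatrix (Fin.succAbove 1) Fin.succ =
      cornerHessenberg z c m := by
  ext a b
  have := b.isLt
  cases a using Fin.cases <;>
  simp only [submatrix_apply, Fin.one_succAbove_zero, Fin.one_succAbove_succ, cornerHessenberg,
    of_apply, Fin.val_succ, Fin.val_zero] <;> split_ifs <;> first | rfl | omega | simp_all

lemma det_cornerHessenberg :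
    (cornerHessenberg z c m).det =
      (-1) ^ (m + 1) * (1 + z) ^ m + (-1) ^ m * (c + 1) * z ^ m := by
  induction m generalizing c with
  | zero => simp [cornerHessenberg]
  | succ m ih =>
    have hcol (i : Fin (m + 2)) (hi : i ≠ 0 ∧ i ≠ 1) :
        cornerHessenberg z c (m + 1) i 0 = 0 := by
      have : 2 ≤ (i : ℕ) := by
        simp only [Ne, Fin.ext_iff, Fin.val_zero, Fin.val_one] at hi
        omega
      simp only [cornerHessenberg, of_apply, Fin.val_zero]
      split_ifs <;> first | rfl | omega | simp_all
    have h00 : cornerHessenberg z c (m + 1) 0 0 = -1 := by simp [cornerHessenberg]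
    have h10 : cornerHessenberg z c (m + 1) 1 0 = z := by simp [cornerHessenberg]
    rw [det_succ_column_zero,
      Fintype.sum_eq_add 0 1 zero_ne_one fun i hi => by rw [hcol i hi, mul_zero, zero_mul],
      h00, h10, cornerHessenberg_submatrix_zero_succ, cornerHessenberg_submatrix_one_succ, ih, ih]
    simp only [Fin.val_zero, Fin.val_one]
    ring

end Hessenberg

lemma sum_Icc_three_choose_mul_pow {R : Type*} [CommRing R] (x : R) (n : ℕ) :
    ∑ k ∈ Icc 3 n, ((n - 2).choose (k - 2) : R) * x ^ (n - k) =
      (1 + x) ^ (n - 2) - x ^ (n - 2) := by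
  have hreflect : ∑ k ∈ Icc 3 n, ((n - 2).choose (k - 2) : R) * x ^ (n - k) =
      ∑ j ∈ range (n - 2), x ^ j * ((n - 2).choose j : R) := by
    refine sum_nbij' (n - ·) (n - ·) ?_ ?_ ?_ ?_ ?_ <;> intro k hk <;>
      simp only [mem_Icc, mem_range] at hk ⊢
    any_goals omega
    rw [mul_comm, ← Nat.choose_symm (by omega : k - 2 ≤ n - 2),
      show n - 2 - (k - 2) = n - k by omega]
  rw [hreflect, add_comm, add_pow, sum_range_succ]
  simp

section TournamentR

variable (R : Type*) [CommRing R]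

/-- The matrix `R_n` of the statement, with `v_1, …, v_n` indexed by `0, …, n - 1`. -/
def tournamentR (n : ℕ) : Matrix (Fin n) (Fin n) R :=
  Matrix.of fun i j =>
    if ((i : ℕ) < j ∧ ¬((i : ℕ) = 0 ∧ (j : ℕ) = n - 1)) ∨
        ((i : ℕ) = n - 1 ∧ (j : ℕ) = 0) then 1 else 0

variable (m : ℕ)

lemma charmatrix_tournamentR_last_zero :
    charmatrix (tournamentR R (m + 2)) (Fin.last (m + 1)) 0 = -1 := by
  simp [tournamentR]

lemma charmatrix_tournamentR_last_last :
    charmatrix (tournamentR R (m + 2)) (Fin.last (m + 1)) (Fin.last (m + 1)) = X := by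
  simp [tournamentR]

lemma charmatrix_tournamentR_last_eq_zero (j : Fin (m + 2)) (h0 : j ≠ 0)
    (hl : j ≠ Fin.last (m + 1)) :
    charmatrix (tournamentR R (m + 2)) (Fin.last (m + 1)) j = 0 := by
  have hj : (j : ℕ) < m + 1 := Fin.val_lt_last hl
  have hj0 : (j : ℕ) ≠ 0 := Fin.val_ne_zero_iff.mpr h0
  simp only [charmatrix_apply_ne _ _ _ hl.symm, tournamentR, of_apply, Fin.val_last]
  rw [if_neg (by omega), map_zero, neg_zero]

lemma det_charmatrix_tournamentR_submatrix_castSucc_castSucc :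
    ((charmatrix (tournamentR R (m + 2))).submatrix Fin.castSucc Fin.castSucc).det =
      X ^ (m + 1) := by
  have hupper : ((charmatrix (tournamentR R (m + 2))).submatrix Fin.castSucc
      Fin.castSucc).IsUpperTriangular := by
    intro i j hji
    have := i.isLt
    have hne : (Fin.castSucc i : Fin (m + 2)) ≠ Fin.castSucc j := by simpa using hji.ne'
    simp only [submatrix_apply, charmatrix_apply_ne _ _ _ hne, tournamentR, of_apply,
      Fin.val_castSucc]
    rw [if_neg (by simp only [id, Fin.lt_def] at hji; omega), map_zero, neg_zero]
  have hdiag (i : Fin (m + 1)) :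
      (charmatrix (tournamentR R (m + 2))).submatrix Fin.castSucc Fin.castSucc i i = X := by
    have := i.isLt
    simp only [submatrix_apply, charmatrix_apply_eq, tournamentR, of_apply, Fin.val_castSucc]
    rw [if_neg (by omega), map_zero, sub_zero]
  rw [det_of_isUpperTriangular hupper, Fintype.prod_congr _ _ hdiag, prod_const, card_univ,
    Fintype.card_fin]

lemma charmatrix_tournamentR_submatrix_castSucc_succ :
    (charmatrix (tournamentR R (m + 2))).submatrix Fin.castSucc Fin.succ =
      cornerHessenberg X 0 m := by
  refine Matrix.ext fun a b => ?_
  have := b.isLt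
  by_cases hab : (a : ℕ) = b + 1
  · have hdiag : (Fin.castSucc a : Fin (m + 2)) = Fin.succ b := Fin.ext hab
    simp [hdiag, cornerHessenberg, tournamentR, hab]
  · have hne : (Fin.castSucc a : Fin (m + 2)) ≠ Fin.succ b := fun h => hab (congrArg Fin.val h)
    simp only [submatrix_apply, charmatrix_apply_ne _ _ _ hne, tournamentR, cornerHessenberg,
      of_apply, Fin.val_castSucc, Fin.val_succ, Nat.add_one_ne_zero, and_false, or_false,
      if_neg hab]
    split_ifs <;> first | omega | simp

lemma charpoly_tournamentR :
    (tournamentR R (m + 2)).charpoly = X ^ (m + 2) + X ^ m - (1 + X) ^ m := by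
  have hsign : ((-1 : R[X]) ^ m) ^ 2 = 1 := by
    rw [← pow_mul, mul_comm, pow_mul, neg_one_sq, one_pow]
  rw [charpoly, det_succ_row _ (Fin.last (m + 1)),
    Fintype.sum_eq_add 0 (Fin.last (m + 1)) Fin.last_pos.ne
      fun j hj => by rw [charmatrix_tournamentR_last_eq_zero R m j hj.1 hj.2, mul_zero, zero_mul],
    Fin.succAbove_last, Fin.succAbove_zero, charmatrix_tournamentR_last_zero,
    charmatrix_tournamentR_last_last, charmatrix_tournamentR_submatrix_castSucc_succ,
    det_charmatrix_tournamentR_submatrix_castSucc_castSucc, det_cornerHessenberg]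
  simp only [Fin.val_last, Fin.val_zero]
  linear_combination (X ^ (m + 2) + X ^ m - (1 + X) ^ m) * hsign

end TournamentR

theorem stmt_15 (n : ℕ) (hn : 4 ≤ n) (A : Matrix (Fin n) (Fin n) ℚ)
    (hA : ∀ i j : Fin n,
      A i j = if (i.val < j.val ∧ ¬(i.val = 0 ∧ j.val = n - 1)) ∨
          (i.val = n - 1 ∧ j.val = 0) then 1 else 0) :
    A.charpoly =
      X ^ n - ∑ k ∈ Finset.Icc 3 n, C (((n - 2).choose (k - 2) : ℚ)) * X ^ (n - k) := by
  obtain ⟨m, rfl⟩ : ∃ m, n = m + 2 := ⟨n - 2, by omega⟩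
  obtain rfl : A = tournamentR ℚ (m + 2) := Matrix.ext hA
  simp_rw [map_natCast]
  rw [charpoly_tournamentR, sum_Icc_three_choose_mul_pow, Nat.add_sub_cancel]
  ring
end

section
/- Let n ≥ 4 and let R_n be the tournament obtained from the transitive tournament on v_1, ..., v_n (v_i dominates v_j iff i < j) by reversing the arc from v_1 to v_n. Then R_n is (n−1)-skew-spectrally monomorphic but not (n−1)-spectrally monomorphic. -/
open Polynomial Matrix

/-- A tournament with adjacency matrix `A` is `k`-skew-spectrally monomorphic if all
`k × k` principal submatrices of its skew-adjacency matrix `S = A - Aᵀ` have the same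
characteristic polynomial. -/
def SkewSpecMono {n : ℕ} (k : ℕ) (A : Matrix (Fin n) (Fin n) ℚ) : Prop :=
  ∀ f g : Fin k → Fin n, Function.Injective f → Function.Injective g →
    ((A - Aᵀ).submatrix f f).charpoly = ((A - Aᵀ).submatrix g g).charpoly

/-! Deleting a vertex of `R_{m+1}` leaves `T_m` (for the first or last vertex) or `R_m` (for any
other vertex). Negating the first row and column of the skew matrix of `R_m` (switching at `v_1`)
gives the skew matrix of the transitive tournament with vertex order `v_2, …, v_{m-1}, v_1, v_m`,
so all these skew matrices are similar. On the other hand the adjacency matrix of `T_m` is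
nilpotent, while for `m ≥ 3` the tournament `R_m` contains the 3-cycle `v_1 → v_2 → v_m → v_1`,
so its adjacency matrix `A` has `tr A³ > 0` and is not nilpotent. -/

open Function

def adjT (N : ℕ) : Matrix (Fin N) (Fin N) ℚ :=
  of fun i j => if i.val < j.val then 1 else 0

/-- The adjacency matrix of `R_N`, with `v_1, …, v_N` indexed by `0, …, N - 1`. -/
def adjR (N : ℕ) : Matrix (Fin N) (Fin N) ℚ :=
  of fun i j => if (i.val < j.val ∧ ¬(i.val = 0 ∧ j.val = N - 1)) ∨
    (i.val = N - 1 ∧ j.val = 0) then 1 else 0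

namespace Fin

theorem val_succAbove {m : ℕ} (v : Fin (m + 1)) (i : Fin m) :
    (v.succAbove i : ℕ) = if i.val < v.val then i.val else i.val + 1 := by
  unfold succAbove
  split_ifs <;> simp_all [lt_def]

theorem val_cycleRange {n : ℕ} (i j : Fin n) :
    (cycleRange i j : ℕ) = if j.val < i.val then j.val + 1 else if j = i then 0 else j.val := by
  rcases lt_trichotomy j i with h | rfl | h
  · rw [coe_cycleRange_of_lt h, if_pos (lt_def.mp h)]
  · rw [coe_cycleRange_of_le le_rfl]
    simp
  · rw [cycleRange_of_gt h, if_neg (lt_asymm (lt_def.mp h)), if_neg h.ne']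

theorem exists_succAbove_comp_equiv {m : ℕ} {f : Fin m → Fin (m + 1)} (hf : Injective f) :
    ∃ (v : Fin (m + 1)) (σ : Fin m ≃ Fin m), f = v.succAbove ∘ σ := by
  obtain ⟨v, hv⟩ : ∃ v, ∀ k, f k ≠ v := by
    by_contra! h
    simpa using Fintype.card_le_of_surjective f fun v => (h v).imp fun _ => id
  choose g hg using fun k => exists_succAbove_eq (hv k)
  have hg_inj : Injective g := fun a b hab => hf (by rw [← hg a, ← hg b, hab])
  exact ⟨v, Equiv.ofBijective g (Finite.injective_iff_bijective.mp hg_inj),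
    funext fun k => (hg k).symm⟩

end Fin

namespace Matrix

section Charpoly

variable {R ι κ : Type*} [CommRing R] [Fintype ι] [DecidableEq ι] [Fintype κ] [DecidableEq κ]

theorem charpoly_submatrix_equiv (A : Matrix ι ι R) (e : κ ≃ ι) :
    (A.submatrix e e).charpoly = A.charpoly := by
  simpa using charpoly_reindex e.symm A

theorem charpoly_mul_mul_of_mul_self_eq_one {D : Matrix ι ι R} (hD : D * D = 1)
    (A : Matrix ι ι R) : (D * A * D).charpoly = A.charpoly := by
  rw [charpoly_mul_comm, ← mul_assoc, hD, one_mul]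

theorem exists_charpoly_submatrix_eq_succAbove {m : ℕ}
    (A : Matrix (Fin (m + 1)) (Fin (m + 1)) R) {f : Fin m → Fin (m + 1)} (hf : Injective f) :
    ∃ v : Fin (m + 1),
      (A.submatrix f f).charpoly = (A.submatrix v.succAbove v.succAbove).charpoly := by
  obtain ⟨v, σ, rfl⟩ := Fin.exists_succAbove_comp_equiv hf
  exact ⟨v, by rw [← submatrix_submatrix, charpoly_submatrix_equiv]⟩

end Charpoly

theorem not_isNilpotent_of_three_cycle {R ι : Type*} [CommRing R] [LinearOrder R]
    [IsStrictOrderedRing R] [Fintype ι] [DecidableEq ι] {A : Matrix ι ι R}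
    (hA : ∀ i j, 0 ≤ A i j) {a b c : ι} (hab : 0 < A a b) (hbc : 0 < A b c) (hca : 0 < A c a) :
    ¬ IsNilpotent A := by
  rintro ⟨k, hk⟩
  have hA2 : ∀ i j, 0 ≤ (A * A) i j := fun i j =>
    Finset.sum_nonneg fun l _ => mul_nonneg (hA i l) (hA l j)
  have hA3 : ∀ i, 0 ≤ (A * A * A) i i := fun i =>
    Finset.sum_nonneg fun l _ => mul_nonneg (hA2 i l) (hA l i)
  have htrace : 0 < trace (A * A * A) :=
    calc 0 < A a b * A b c * A c a := by positivity
      _ ≤ (A * A) a c * A c a := by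
        gcongr
        exact Finset.single_le_sum (fun l _ => mul_nonneg (hA a l) (hA l c)) (Finset.mem_univ b)
      _ ≤ (A * A * A) a a :=
        Finset.single_le_sum (fun l _ => mul_nonneg (hA2 a l) (hA l a)) (Finset.mem_univ c)
      _ ≤ trace (A * A * A) := Finset.single_le_sum (fun i _ => hA3 i) (Finset.mem_univ a)
  have hnil : IsNilpotent (A * A * A) :=
    ⟨k, by rw [← pow_three', ← pow_mul, mul_comm, pow_mul, hk, zero_pow three_ne_zero]⟩
  exact htrace.ne' (isNilpotent_trace_of_isNilpotent hnil).eq_zero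

end Matrix

open Matrix

theorem adjR_submatrix_succAbove_zero (m : ℕ) :
    (adjR (m + 1)).submatrix (Fin.succAbove 0) (Fin.succAbove 0) = adjT m := by
  ext i j
  simp only [adjR, adjT, submatrix_apply, of_apply, Fin.succAbove_zero, Fin.val_succ]
  grind

theorem adjR_submatrix_succAbove_last (m : ℕ) :
    (adjR (m + 1)).submatrix (Fin.last m).succAbove (Fin.last m).succAbove = adjT m := by
  ext i j
  simp only [adjR, adjT, submatrix_apply, of_apply, Fin.succAbove_last, Fin.val_castSucc]
  grind

theorem adjR_submatrix_succAbove_of_ne {m : ℕ} {v : Fin (m + 1)} (h0 : v ≠ 0)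
    (hlast : v ≠ Fin.last m) : (adjR (m + 1)).submatrix v.succAbove v.succAbove = adjR m := by
  rw [Ne, Fin.ext_iff, Fin.val_zero] at h0
  rw [Ne, Fin.ext_iff, Fin.val_last] at hlast
  ext i j
  simp only [adjR, submatrix_apply, of_apply, Fin.val_succAbove]
  grind

theorem charpoly_adjT (N : ℕ) : (adjT N).charpoly = X ^ N := by
  have hU : (adjT N).IsUpperTriangular := fun i j (hij : j < i) => if_neg (lt_asymm hij)
  rw [charpoly_of_isUpperTriangular _ hU]
  simp [adjT]

theorem charpoly_adjR_ne {N : ℕ} (hN : 3 ≤ N) : (adjR N).charpoly ≠ X ^ N := by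
  intro h
  have hpow : adjR N ^ N = 0 := by simpa [h] using aeval_self_charpoly (adjR N)
  have hnonneg : ∀ i j, 0 ≤ adjR N i j := fun i j => by
    simp only [adjR, of_apply]
    split_ifs <;> norm_num
  refine not_isNilpotent_of_three_cycle hnonneg (a := ⟨0, by omega⟩) (b := ⟨1, by omega⟩)
    (c := ⟨N - 1, by omega⟩) ?_ ?_ ?_ ⟨N, hpow⟩ <;>
  · simp only [adjR, of_apply]
    grind

theorem charpoly_skew_adjR (N : ℕ) [NeZero N] :
    (adjR N - (adjR N)ᵀ).charpoly = (adjT N - (adjT N)ᵀ).charpoly := by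
  set ε : Fin N → ℚ := fun i => if i.val = 0 then -1 else 1
  have hε : diagonal ε * diagonal ε = 1 := by
    rw [diagonal_mul_diagonal, ← diagonal_one]
    congr 1
    funext i
    simp only [ε]
    split_ifs <;> norm_num
  -- reorders the vertices as `v_2, …, v_{N-1}, v_1, v_N`
  set c := Fin.cycleRange (⟨N - 2, by have := NeZero.pos N; omega⟩ : Fin N)
  have hswitch : (diagonal ε * (adjR N - (adjR N)ᵀ) * diagonal ε).submatrix c c =
      adjT N - (adjT N)ᵀ := by
    ext i j
    simp only [submatrix_apply, mul_diagonal, diagonal_mul, Matrix.sub_apply, transpose_apply,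
      adjR, adjT, of_apply, c, Fin.val_cycleRange, ε, Fin.ext_iff]
    grind
  rw [← charpoly_mul_mul_of_mul_self_eq_one hε, ← charpoly_submatrix_equiv _ c, hswitch]

theorem charpoly_skew_adjR_submatrix {m : ℕ} {f : Fin m → Fin (m + 1)} (hf : Injective f) :
    ((adjR (m + 1) - (adjR (m + 1))ᵀ).submatrix f f).charpoly =
      (adjT m - (adjT m)ᵀ).charpoly := by
  obtain ⟨v, hv⟩ := exists_charpoly_submatrix_eq_succAbove (adjR (m + 1) - (adjR (m + 1))ᵀ) hf
  rw [hv, submatrix_sub, Pi.sub_apply, Pi.sub_apply, ← transpose_submatrix]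
  rcases eq_or_ne v 0 with rfl | h0
  · rw [adjR_submatrix_succAbove_zero]
  rcases eq_or_ne v (Fin.last m) with rfl | hlast
  · rw [adjR_submatrix_succAbove_last]
  have : NeZero m := ⟨by rintro rfl; exact h0 (Fin.ext (by omega))⟩
  rw [adjR_submatrix_succAbove_of_ne h0 hlast, charpoly_skew_adjR]

theorem stmt_16 (n : ℕ) (hn : 4 ≤ n) (A : Matrix (Fin n) (Fin n) ℚ)
    (hA : ∀ i j : Fin n,
      A i j = if (i.val < j.val ∧ ¬(i.val = 0 ∧ j.val = n - 1)) ∨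
          (i.val = n - 1 ∧ j.val = 0) then 1 else 0) :
    SkewSpecMono (n - 1) A ∧ ¬ SpecMono (n - 1) A := by
  obtain ⟨m, rfl⟩ : ∃ m, n = m + 1 := ⟨n - 1, by omega⟩
  obtain rfl : A = adjR (m + 1) := by ext i j; exact hA i j
  refine ⟨fun f g hf hg => (charpoly_skew_adjR_submatrix hf).trans
    (charpoly_skew_adjR_submatrix hg).symm, fun hmono => ?_⟩
  let v : Fin (m + 1) := ⟨1, by omega⟩
  have h := hmono v.succAbove (Fin.succAbove 0) Fin.succAbove_right_injective
    Fin.succAbove_right_injective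
  rw [adjR_submatrix_succAbove_zero, charpoly_adjT,
    adjR_submatrix_succAbove_of_ne (v := v) (by simp [v, Fin.ext_iff])
      (by simp [v, Fin.ext_iff]; omega)] at h
  exact charpoly_adjR_ne (by omega) h
end

section
/- A regular n-tournament is (n−1)-spectrally monomorphic if and only if it is (n−1)-skew-spectrally monomorphic. -/
open Polynomial Matrix

/-!
Write `J` for the all-ones matrix. Since `Aᵀ = J - I - A`, we have
`(2y + 1) I - S = 2 (yI - A + J / 2)`, so the principal `(n-1)`-minors of `(2y+1) I - S` are
`2^(n-1)` times those of `N = Y + J / 2`, where `Y = yI - A`. Regularity gives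
`AJ = JA = r J` with `r = (n-1)/2`, hence for generic `y` the Sherman–Morrison formula
`N⁻¹ = Y⁻¹ - c J` holds with a scalar `c`. A principal `(n-1)`-minor omitting vertex `k` is
`det M · (M⁻¹)ₖₖ`, so the minors of `N` are an affine function, with nonzero slope and
coefficients independent of `k`, of the minors of `Y`. Comparing at infinitely many `y` transfers
equality of characteristic polynomials in both directions.
-/

namespace Matrix

variable {R K ι κ : Type*}

theorem of_const_one_mul_self [Semiring R] [Fintype ι] :
    (of fun _ _ => 1 : Matrix ι ι R) * of (fun _ _ => 1) =
      (Fintype.card ι : R) • of fun _ _ => 1 := by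
  ext i j
  simp [mul_apply]

variable [DecidableEq ι] [Fintype κ] [DecidableEq κ]

theorem eval_charpoly_submatrix [CommRing R] (M : Matrix ι ι R) {f : κ → ι}
    (hf : Function.Injective f) (t : R) :
    (M.submatrix f f).charpoly.eval t = ((t • 1 - M).submatrix f f).det := by
  rw [eval_charpoly]
  congr 1
  ext i j
  simp [one_apply, diagonal_apply, hf.eq_iff]

variable [Fintype ι]

theorem det_submatrix_eq_adjugate_apply [CommRing R] (M : Matrix ι ι R) {f : κ → ι}
    (hf : Function.Injective f) {k : ι} (hk : k ∉ Set.range f)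
    (hcard : Fintype.card ι = Fintype.card κ + 1) :
    (M.submatrix f f).det = M.adjugate k k := by
  have hne : ∀ a, f a ≠ k := fun a h => hk ⟨a, h⟩
  let e : κ ⊕ Unit ≃ ι := Equiv.ofBijective (Sum.elim f fun _ => k) <| by
    rw [Fintype.bijective_iff_injective_and_card]
    refine ⟨?_, by simp [hcard]⟩
    rintro (a | ⟨⟩) (b | ⟨⟩) h <;> simp_all [hf.eq_iff]
  have hblocks : (M.updateRow k (Pi.single k 1)).submatrix e e =
      fromBlocks (M.submatrix f f) (of fun a _ => M (f a) k) 0 1 := by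
    ext (a | ⟨⟩) (b | ⟨⟩) <;> simp [e, updateRow_apply, hne]
  rw [adjugate_apply, ← det_submatrix_equiv_self e, hblocks, det_fromBlocks_zero₂₁, det_one,
    mul_one]

theorem det_submatrix_eq_det_mul_inv_apply [Field K] (M : Matrix ι ι K) (hM : M.det ≠ 0)
    {f : κ → ι} (hf : Function.Injective f) {k : ι} (hk : k ∉ Set.range f)
    (hcard : Fintype.card ι = Fintype.card κ + 1) :
    (M.submatrix f f).det = M.det * M⁻¹ k k := by
  rw [det_submatrix_eq_adjugate_apply M hf hk hcard, inv_def, smul_apply, smul_eq_mul,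
    Ring.inverse_eq_inv', mul_inv_cancel_left₀ hM]

theorem add_smul_mul_inv_sub_smul_eq_one [Field K] {Y J : Matrix ι ι K} {μ m t : K}
    (hY : IsUnit Y.det) (hYJ : Y * J = μ • J) (hJY : J * Y = μ • J) (hJJ : J * J = m • J)
    (hμ : μ ≠ 0) (hμt : μ + m * t ≠ 0) :
    (Y + t • J) * (Y⁻¹ - (t / (μ * (μ + m * t))) • J) = 1 := by
  have hJYinv : J * Y⁻¹ = μ⁻¹ • J := by
    rw [← inv_smul_smul₀ hμ (J * Y⁻¹), ← smul_mul, ← hJY, Matrix.mul_assoc,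
      mul_nonsing_inv Y hY, Matrix.mul_one]
  simp only [add_mul, mul_sub, mul_nonsing_inv Y hY, Matrix.mul_smul, Matrix.smul_mul, hYJ,
    hJYinv, hJJ, smul_smul]
  have hcoeff : t / (μ * (μ + m * t)) * (μ + m * t) = t * μ⁻¹ := by
    rw [div_mul_eq_mul_div, mul_div_mul_right _ _ hμt, div_eq_mul_inv]
  linear_combination (norm := module) (-hcoeff) • J

end Matrix

theorem Polynomial.eq_of_frequently_eval_eq {K : Type*} [Field K] {p q : K[X]}
    (h : ∃ᶠ x in Filter.cofinite, p.eval x = q.eval x) : p = q :=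
  eq_of_infinite_eval_eq p q (Filter.frequently_cofinite_iff_infinite.mp h)

theorem IsRegularTournament.mul_of_const_one {n : ℕ} {A : Matrix (Fin n) (Fin n) ℚ}
    (hR : IsRegularTournament A) :
    A * of (fun _ _ => 1) = ((n - 1) / 2 : ℚ) • of fun _ _ => 1 := by
  ext i j
  simp [mul_apply, hR i]

namespace IsTournament

variable {n : ℕ} {A : Matrix (Fin n) (Fin n) ℚ}

theorem transpose_eq (hT : IsTournament A) : Aᵀ = of (fun _ _ => 1) - 1 - A := by
  rw [← hT.2.2, add_sub_cancel_left]

theorem of_const_one_mul (hT : IsTournament A) (hR : IsRegularTournament A) :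
    of (fun _ _ => 1) * A = ((n - 1) / 2 : ℚ) • of fun _ _ => 1 := by
  have h : Aᵀ * of (fun _ _ => 1) = ((n - 1) / 2 : ℚ) • of fun _ _ => 1 := by
    rw [hT.transpose_eq, sub_mul, sub_mul, of_const_one_mul_self, Fintype.card_fin,
      Matrix.one_mul, hR.mul_of_const_one]
    module
  calc of (fun _ _ => 1) * A = (Aᵀ * of fun _ _ => 1)ᵀ := by
        rw [transpose_mul, transpose_transpose]
        rfl
    _ = _ := by
        rw [h]
        rfl

theorem smul_one_sub_skew (hT : IsTournament A) (y : ℚ) :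
    (2 * y + 1) • 1 - (A - Aᵀ) =
      (2 : ℚ) • (y • 1 - A + (1 / 2 : ℚ) • of fun _ _ => 1) := by
  rw [hT.transpose_eq]
  module

theorem eventually_eval_charpoly_skew_submatrix (hT : IsTournament A)
    (hR : IsRegularTournament A) (hn : 0 < n) :
    ∀ᶠ y in Filter.cofinite, ∃ α β : ℚ, α ≠ 0 ∧
      ∀ f : Fin (n - 1) → Fin n, Function.Injective f →
      ((A - Aᵀ).submatrix f f).charpoly.eval (2 * y + 1) =
        α * (A.submatrix f f).charpoly.eval y + β := by
  filter_upwards [(finite_setOfPred_isRoot A.charpoly_monic.ne_zero).eventually_cofinite_notMem,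
    Filter.eventually_cofinite_ne ((n - 1) / 2 : ℚ), Filter.eventually_cofinite_ne (-1 / 2 : ℚ)]
    with y hroot hr hhalf
  set J : Matrix (Fin n) (Fin n) ℚ := of fun _ _ => 1
  set Y : Matrix (Fin n) (Fin n) ℚ := y • 1 - A
  set N := Y + (1 / 2 : ℚ) • J
  have hY : Y.det ≠ 0 := by
    rwa [IsRoot.def, eval_charpoly, scalar_apply, ← smul_one_eq_diagonal] at hroot
  have hYJ : Y * J = (y - (n - 1) / 2) • J := by
    rw [sub_mul, smul_mul, Matrix.one_mul, hR.mul_of_const_one, sub_smul]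
  have hJY : J * Y = (y - (n - 1) / 2) • J := by
    rw [mul_sub, Matrix.mul_smul, Matrix.mul_one, hT.of_const_one_mul hR, sub_smul]
  have hNZ := add_smul_mul_inv_sub_smul_eq_one (t := 1 / 2) (isUnit_iff_ne_zero.mpr hY) hYJ hJY
    (by rw [of_const_one_mul_self, Fintype.card_fin]) (sub_ne_zero.mpr hr)
    -- `(y - (n - 1) / 2) + n / 2 = y + 1 / 2`
    (fun h => hhalf (by linarith))
  have hN : N.det ≠ 0 := det_ne_zero_of_right_inverse hNZ
  refine ⟨2 ^ (n - 1) * N.det / Y.det, -(2 ^ (n - 1) * N.det * ((1 / 2) /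
      ((y - (n - 1) / 2) * (y - (n - 1) / 2 + n * (1 / 2))))),
    div_ne_zero (mul_ne_zero (pow_ne_zero _ two_ne_zero) hN) hY, fun f hf => ?_⟩
  have hcard : Fintype.card (Fin n) = Fintype.card (Fin (n - 1)) + 1 := by
    simp only [Fintype.card_fin]
    omega
  obtain ⟨k, hk⟩ : ∃ k, k ∉ Set.range f := by
    by_contra! h
    exact (Fintype.card_le_of_surjective f h).not_gt (by omega)
  calc ((A - Aᵀ).submatrix f f).charpoly.eval (2 * y + 1)
      = ((2 : ℚ) • N.submatrix f f).det := by
        rw [eval_charpoly_submatrix _ hf, hT.smul_one_sub_skew]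
        rfl
    _ = 2 ^ (n - 1) * N.det * N⁻¹ k k := by
        rw [det_smul, Fintype.card_fin, det_submatrix_eq_det_mul_inv_apply N hN hf hk hcard,
          mul_assoc]
    _ = _ := by
        rw [inv_eq_right_inv hNZ, eval_charpoly_submatrix A hf,
          det_submatrix_eq_det_mul_inv_apply Y hY hf hk hcard]
        simp only [Matrix.sub_apply, Matrix.smul_apply, of_apply, smul_eq_mul, J]
        field_simp
        ring

end IsTournament

theorem stmt_17 (n : ℕ) (A : Matrix (Fin n) (Fin n) ℚ)
    (hT : IsTournament A) (hR : IsRegularTournament A) :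
    SpecMono (n - 1) A ↔ SkewSpecMono (n - 1) A := by
  obtain rfl | hn := Nat.eq_zero_or_pos n
  · simp [SpecMono, SkewSpecMono]
  have key := hT.eventually_eval_charpoly_skew_submatrix hR hn
  have hdouble : Filter.Tendsto (fun y : ℚ => 2 * y + 1) Filter.cofinite Filter.cofinite :=
    Function.Injective.tendsto_cofinite fun a b h => by linarith
  constructor
  · intro hA f g hf hg
    refine eq_of_frequently_eval_eq (hdouble.frequently (key.mono ?_).frequently)
    rintro y ⟨α, β, -, h⟩
    rw [h f hf, h g hg, hA f g hf hg]
  · intro hS f g hf hg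
    refine eq_of_frequently_eval_eq (key.mono ?_).frequently
    rintro y ⟨α, β, hα, h⟩
    have hfg := h g hg
    rw [← hS f g hf hg, h f hf] at hfg
    exact mul_left_cancel₀ hα (add_right_cancel hfg)
end
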